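/- arXiv:1704.04619 — 2 statements merged into one kernel-verified Lean document; each statement's English description precedes it below -/
import Mathlib

section
/- Characterization of uniform stage order (Theorem 5): Fix an integer s ≥ 1 and abscissae c_1, …, c_s ∈ ℝ with c_i ≥ 0, and set c_{s+1} := 1. A TSRK tableau consists of polynomial coefficient functions u_i : ℝ → ℝ and ã_{ij}, a_{ij} : ℝ → ℝ for i = 1, …, s+1 and j = 1, …, s. For integers k ≥ 1 define the polynomial Γ_{ik}(α) := (1/(k−1)!)·[ (1−u_i(α))·(−1)^k/k + Σ_{j=1}^{s} ã_{ij}(α)·(−(1−c_j))^{k−1} + Σ_{j=1}^{s} a_{ij}(α)·c_j^{k−1} − α^k/k ]. For a differentiable function y : ℝ → ℝ, t ∈ ℝ, h > 0, i ∈ {1,…,s+1}, α ∈ [0,c_i], define the stage residual E_i(y, t, h, α) := y(t+αh) − (1−u_i(α))·y(t−h) − u_i(α)·y(t) − h·Σ_{j=1}^{s} ã_{ij}(α)·y′(t+(c_j−1)h) − h·Σ_{j=1}^{s} a_{ij}(α)·y′(t+c_j·h). Let q̃ ≥ 1 be an integer. Then the following are equivalent: (a) Γ_{ik}(α) = 0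 for all i = 1,…,s+1, all k = 1,…,q̃ and all α ∈ [0,c_i]; (b) for every infinitely differentiable function y : ℝ → ℝ and every t ∈ ℝ there exist C > 0 and h₀ > 0 such that max_{1≤i≤s+1} sup_{α∈[0,c_i]} |E_i(y,t,h,α)| ≤ C·h^{q̃+1} for all h ∈ (0,h₀]. -/
open Finset intervalIntegral
open scoped ContDiff


/-- The order polynomial `Γ_{ik}` of a TSRK method with `s` stages, for a row with
coefficient functions `u` (previous-values weight), `atil` (previous-step stage weights)
and `a` (current-step stage weights), with abscissae `c`. -/
noncomputable def GammaRow (s : ℕ) (c : Fin s → ℝ) (u : ℝ → ℝ) (atil a : Fin s → ℝ → ℝ)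
    (k : ℕ) (α : ℝ) : ℝ :=
  (1 / (Nat.factorial (k - 1) : ℝ)) *
    ((1 - u α) * (-1) ^ k / k
      + (∑ j, atil j α * (-(1 - c j)) ^ (k - 1))
      + (∑ j, a j α * (c j) ^ (k - 1))
      - α ^ k / k)

/-- The stage residual (local discretization error) of one row of a TSRK method. -/
noncomputable def stageResidual (s : ℕ) (c : Fin s → ℝ) (u : ℝ → ℝ) (atil a : Fin s → ℝ → ℝ)
    (y : ℝ → ℝ) (t h α : ℝ) : ℝ :=
  y (t + α * h) - (1 - u α) * y (t - h) - u α * y t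
    - h * ∑ j, atil j α * deriv y (t + (c j - 1) * h)
    - h * ∑ j, a j α * deriv y (t + c j * h)

section TaylorHelpers

/-- One-sided Taylor bound to the right of `0`. -/
lemma taylor_right : ∀ (n : ℕ) (f : ℝ → ℝ), ContDiff ℝ ∞ f → ∀ (M R : ℝ),
    (∀ z ∈ Set.Icc (0:ℝ) R, |iteratedDeriv (n+1) f z| ≤ M) →
    ∀ x ∈ Set.Icc (0:ℝ) R,
      |f x - ∑ k ∈ Finset.range (n+1), iteratedDeriv k f 0 * x ^ k / (Nat.factorial k : ℝ)|
        ≤ M * x ^ (n+1) / (Nat.factorial (n+1) : ℝ) := by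
  intro n
  induction n with
  | zero =>
    intro f hf M R hM x hx
    rw [Finset.sum_range_one]
    simp only [iteratedDeriv_zero, pow_zero, Nat.factorial_zero, Nat.cast_one, mul_one,
      div_one, pow_one, Nat.factorial_one]
    have hder : ∀ z ∈ Set.Icc (0:ℝ) R, ‖deriv f z‖ ≤ M := by
      intro z hz
      simpa [iteratedDeriv_one] using hM z hz
    have := (convex_Icc (0:ℝ) R).norm_image_sub_le_of_norm_deriv_le
      (fun z _ => (hf.differentiable (by norm_num)).differentiableAt)
      hder (Set.left_mem_Icc.2 (hx.1.trans hx.2)) hx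
    calc |f x - f 0| ≤ M * ‖x - 0‖ := by simpa [Real.norm_eq_abs] using this
    _ = M * x := by rw [sub_zero, Real.norm_eq_abs, abs_of_nonneg hx.1]
    _ ≤ M * x ^ (0+1) / (Nat.factorial (0+1) : ℝ) := by norm_num
  | succ n IH =>
    intro f hf M R hM x hx
    have hg : ContDiff ℝ ∞ (deriv f) := (contDiff_infty_iff_deriv.1 hf).2
    have hMg : ∀ z ∈ Set.Icc (0:ℝ) R, |iteratedDeriv (n+1) (deriv f) z| ≤ M := by
      intro z hz
      rw [← iteratedDeriv_succ']
      exact hM z hz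
    have IH' := IH (deriv f) hg M R hMg
    have hMnn : 0 ≤ M := le_trans (abs_nonneg _) (hM 0 ⟨le_refl _, hx.1.trans hx.2⟩)
    set d : ℕ → ℝ := fun k => iteratedDeriv k f 0 with hd
    have hdg : ∀ k, iteratedDeriv k (deriv f) 0 = d (k+1) := by
      intro k
      show iteratedDeriv k (deriv f) 0 = iteratedDeriv (k+1) f 0
      rw [iteratedDeriv_succ']
    set P : ℝ → ℝ := fun z => ∑ k ∈ Finset.range (n+2), d k * z ^ k / (Nat.factorial k : ℝ)
    set Q : ℝ → ℝ := fun z => ∑ k ∈ Finset.range (n+1), d (k+1) * z ^ k / (Nat.factorial k : ℝ)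
    have hP : ∀ z : ℝ, HasDerivAt P (Q z) z := by
      intro z
      have : HasDerivAt P (∑ k ∈ Finset.range (n+2),
          d k * ((k:ℝ) * z ^ (k-1)) / (Nat.factorial k : ℝ)) z := by
        apply HasDerivAt.fun_sum
        intro k _
        simpa [mul_div_assoc] using ((hasDerivAt_pow k z).const_mul (d k)).div_const _
      convert this using 1
      rw [Finset.sum_range_succ' (fun k => d k * ((k:ℝ) * z ^ (k-1)) / (Nat.factorial k : ℝ))]
      simp only [Nat.cast_zero, zero_mul, mul_zero, zero_div, add_zero]
      apply Finset.sum_congr rfl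
      intro k _
      have : (Nat.factorial (k+1) : ℝ) = (k+1) * (Nat.factorial k : ℝ) := by
        push_cast [Nat.factorial_succ]; ring
      rw [this]
      have h1 : (Nat.factorial k : ℝ) ≠ 0 := Nat.cast_ne_zero.2 (Nat.factorial_ne_zero k)
      simp only [Nat.add_sub_cancel]
      push_cast
      field_simp
    have hφ : ∀ z : ℝ, HasDerivAt (fun w => f w - P w) (deriv f z - Q z) z := by
      intro z
      exact ((hf.differentiable (by norm_num)).differentiableAt.hasDerivAt).sub (hP z)
    have hφ0 : f 0 - P 0 = 0 := by
      have : P 0 = d 0 := by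
        show (∑ k ∈ Finset.range (n+2), d k * (0:ℝ) ^ k / (Nat.factorial k : ℝ)) = d 0
        rw [Finset.sum_range_succ' (fun k => d k * (0:ℝ) ^ k / (Nat.factorial k : ℝ))]
        simp
      rw [this, hd]; simp
    have hQcont : Continuous Q :=
      continuous_finset_sum _ fun k _ => (continuous_const.mul (continuous_pow k)).div_const _
    have hcont : Continuous (fun z => deriv f z - Q z) :=
      ((contDiff_infty_iff_deriv.1 hf).2.continuous).sub hQcont
    have hint : IntervalIntegrable (fun z => deriv f z - Q z) MeasureTheory.volume 0 x :=
      hcont.intervalIntegrable 0 x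
    have hFTC : ∫ z in (0:ℝ)..x, (deriv f z - Q z) = (f x - P x) - (f 0 - P 0) :=
      integral_eq_sub_of_hasDerivAt (fun z _ => hφ z) hint
    have hboundfun : IntervalIntegrable (fun z : ℝ => M * z ^ (n+1) / (Nat.factorial (n+1) : ℝ))
        MeasureTheory.volume 0 x :=
      ((continuous_const.mul (continuous_pow (n+1))).div_const _).intervalIntegrable 0 x
    have hmeas : ∀ᵐ z ∂(MeasureTheory.volume.restrict (Set.uIoc (0:ℝ) x)),
        ‖deriv f z - Q z‖ ≤ M * z ^ (n+1) / (Nat.factorial (n+1) : ℝ) := by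
      apply MeasureTheory.ae_restrict_of_forall_mem measurableSet_uIoc
      intro z hz
      rw [Set.uIoc_of_le hx.1] at hz
      have hz' : z ∈ Set.Icc (0:ℝ) R := ⟨le_of_lt hz.1, hz.2.trans hx.2⟩
      have := IH' z hz'
      simp only [hdg] at this
      simpa [Real.norm_eq_abs] using this
    have hmeas' : ∀ᵐ z ∂MeasureTheory.volume, z ∈ Set.Ioc (0:ℝ) x →
        ‖deriv f z - Q z‖ ≤ M * z ^ (n+1) / (Nat.factorial (n+1) : ℝ) := by
      rw [← Set.uIoc_of_le hx.1]; exact (MeasureTheory.ae_restrict_iff' measurableSet_uIoc).1 hmeas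
    have hnorm := norm_integral_le_of_norm_le hx.1 hmeas' hboundfun
    rw [hFTC] at hnorm
    have hval : ∫ z in (0:ℝ)..x, M * z ^ (n+1) / (Nat.factorial (n+1) : ℝ)
        = M * x ^ (n+2) / (Nat.factorial (n+2) : ℝ) := by
      have : ∀ z : ℝ, M * z ^ (n+1) / (Nat.factorial (n+1) : ℝ)
          = (M / (Nat.factorial (n+1) : ℝ)) * z ^ (n+1) := fun z => by ring
      simp_rw [this]
      rw [intervalIntegral.integral_const_mul, integral_pow]
      have : (Nat.factorial (n+2) : ℝ) = (n+2) * (Nat.factorial (n+1) : ℝ) := by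
        push_cast [Nat.factorial_succ]; ring
      rw [this, zero_pow (by omega), sub_zero, div_mul_div_comm]
      push_cast
      ring_nf
    rw [hval] at hnorm
    have habs : |M * x ^ (n+2) / (Nat.factorial (n+2) : ℝ)|
        = M * x ^ (n+2) / (Nat.factorial (n+2) : ℝ) := by
      apply abs_of_nonneg
      apply div_nonneg (mul_nonneg hMnn (pow_nonneg hx.1 _)) (Nat.cast_nonneg _)
    rw [hφ0, sub_zero] at hnorm
    simpa [Real.norm_eq_abs, P] using hnorm

lemma taylor_abs (n : ℕ) (f : ℝ → ℝ) (hf : ContDiff ℝ ∞ f) (M R : ℝ)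
    (hM : ∀ z : ℝ, |z| ≤ R → |iteratedDeriv (n+1) f z| ≤ M) (x : ℝ) (hx : |x| ≤ R) :
    |f x - ∑ k ∈ Finset.range (n+1), iteratedDeriv k f 0 * x ^ k / (Nat.factorial k : ℝ)|
      ≤ M * |x| ^ (n+1) / (Nat.factorial (n+1) : ℝ) := by
  have hxR : x ≤ R := le_trans (le_abs_self x) hx
  rcases le_or_gt 0 x with hx0 | hx0
  · have := taylor_right n f hf M R
      (fun z hz => hM z (by rw [abs_of_nonneg hz.1]; exact hz.2)) x ⟨hx0, hxR⟩
    rwa [abs_of_nonneg hx0]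
  · set g : ℝ → ℝ := fun z => f (-z) with hgdef
    have hg : ContDiff ℝ ∞ g := hf.comp contDiff_neg
    have hMg : ∀ z ∈ Set.Icc (0:ℝ) R, |iteratedDeriv (n+1) g z| ≤ M := by
      intro z hz
      rw [hgdef, iteratedDeriv_comp_neg]
      rw [smul_eq_mul, abs_mul, abs_pow, abs_neg, abs_one, one_pow, one_mul]
      exact hM (-z) (by rw [abs_neg, abs_of_nonneg hz.1]; exact hz.2)
    have hmem : -x ∈ Set.Icc (0:ℝ) R := by
      constructor
      · linarith
      · rw [← abs_of_nonpos (le_of_lt hx0)] at *; exact hx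
    have := taylor_right n g hg M R hMg (-x) hmem
    have hgx : g (-x) = f x := by rw [hgdef]; simp
    have hsum : ∀ k, iteratedDeriv k g 0 * (-x) ^ k / (Nat.factorial k : ℝ)
        = iteratedDeriv k f 0 * x ^ k / (Nat.factorial k : ℝ) := by
      intro k
      rw [hgdef, iteratedDeriv_comp_neg, neg_zero, smul_eq_mul]
      have : (-1 : ℝ) ^ k * iteratedDeriv k f 0 * (-x) ^ k
          = iteratedDeriv k f 0 * ((-1) * (-x)) ^ k := by rw [mul_pow]; ring
      rw [this]; norm_num
    rw [hgx] at this
    simp_rw [hsum] at this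
    rwa [abs_of_neg hx0]

lemma taylor_shift (n : ℕ) (y : ℝ → ℝ) (hy : ContDiff ℝ ∞ y) (t R : ℝ) :
    ∃ M : ℝ, 0 ≤ M ∧ ∀ x : ℝ, |x| ≤ R →
      |y (t+x) - ∑ k ∈ Finset.range (n+1), iteratedDeriv k y t * x ^ k / (Nat.factorial k : ℝ)|
        ≤ M * |x| ^ (n+1) := by
  set F : ℝ → ℝ := fun z => y (t + z) with hFdef
  have hF : ContDiff ℝ ∞ F := hy.comp (contDiff_const.add contDiff_id)
  have hFit : ∀ k (z : ℝ), iteratedDeriv k F z = iteratedDeriv k y (t + z) := by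
    intro k z
    rw [hFdef]
    exact congrFun (iteratedDeriv_comp_const_add k y t) z
  obtain ⟨M₀, hM₀⟩ := (isCompact_Icc (a := -R) (b := R)).exists_bound_of_continuousOn
    ((hF.continuous_iteratedDeriv (n+1) (by exact_mod_cast le_top)).continuousOn)
  refine ⟨max M₀ 0 / (Nat.factorial (n+1) : ℝ), by positivity, ?_⟩
  intro x hx
  have key := taylor_abs n F hF (max M₀ 0) R
    (fun z hz => le_trans (by simpa [Real.norm_eq_abs] using hM₀ z (abs_le.1 hz)) (le_max_left _ _))
    x hx
  have h0 : ∀ k, iteratedDeriv k F 0 = iteratedDeriv k y t := by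
    intro k; rw [hFit k 0, add_zero]
  have hFx : F x = y (t + x) := rfl
  rw [hFx] at key
  simp_rw [h0] at key
  calc _ ≤ max M₀ 0 * |x| ^ (n+1) / (Nat.factorial (n+1) : ℝ) := key
    _ = max M₀ 0 / (Nat.factorial (n+1) : ℝ) * |x| ^ (n+1) := by ring

end TaylorHelpers

section ResidualHelpers

lemma deriv_monomial (t : ℝ) (m : ℕ) :
    deriv (fun x : ℝ => (x - t) ^ (m+1)) = fun x => ((m:ℝ)+1) * (x - t) ^ m := by
  funext x
  have : HasDerivAt (fun x : ℝ => (x - t) ^ (m+1))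
      (((m+1 : ℕ) : ℝ) * (x - t) ^ (m+1-1) * 1) x :=
    ((hasDerivAt_id x).sub_const t).pow (m+1)
  rw [this.deriv]
  push_cast
  ring

lemma residual_monomial (s : ℕ) (c : Fin s → ℝ) (u : ℝ → ℝ) (atil a : Fin s → ℝ → ℝ)
    (t h α : ℝ) (m : ℕ) :
    stageResidual s c u atil a (fun x => (x - t) ^ (m+1)) t h α
      = -(Nat.factorial (m+1) : ℝ) * GammaRow s c u atil a (m+1) α * h ^ (m+1) := by
  rw [stageResidual, deriv_monomial, GammaRow]
  simp only [Nat.add_sub_cancel]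
  have e1 : ∀ j : Fin s, atil j α * (((m:ℝ)+1) * ((t + (c j - 1) * h) - t) ^ m)
      = ((m:ℝ)+1) * h ^ m * (atil j α * (-(1 - c j)) ^ m) := by
    intro j
    rw [show (t + (c j - 1) * h) - t = (c j - 1) * h by ring, mul_pow,
      show (-(1 - c j)) = c j - 1 by ring]
    ring
  have e2 : ∀ j : Fin s, a j α * (((m:ℝ)+1) * ((t + c j * h) - t) ^ m)
      = ((m:ℝ)+1) * h ^ m * (a j α * (c j) ^ m) := by
    intro j
    rw [show (t + c j * h) - t = c j * h by ring, mul_pow]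
    ring
  rw [Finset.sum_congr rfl (fun j _ => e1 j), Finset.sum_congr rfl (fun j _ => e2 j),
    ← Finset.mul_sum, ← Finset.mul_sum]
  set S1 := ∑ j, atil j α * (-(1 - c j)) ^ m
  set S2 := ∑ j, a j α * (c j) ^ m
  rw [show t + α * h - t = α * h by ring, show t - h - t = -h by ring, sub_self,
    zero_pow (Nat.succ_ne_zero m), mul_zero, mul_pow,
    show (-h) ^ (m+1) = (-1:ℝ)^(m+1) * h^(m+1) by rw [neg_pow]]
  have hfac : (Nat.factorial (m+1) : ℝ) = ((m:ℝ)+1) * (Nat.factorial m : ℝ) := by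
    push_cast [Nat.factorial_succ]; ring
  have h1 : (Nat.factorial m : ℝ) ≠ 0 := Nat.cast_ne_zero.2 (Nat.factorial_ne_zero m)
  have h2 : ((m:ℝ)+1) ≠ 0 := by positivity
  have h3 : ((m+1 : ℕ) : ℝ) = (m:ℝ)+1 := by push_cast; ring
  rw [hfac, h3]
  field_simp
  ring

lemma stageResidual_sum (s : ℕ) (c : Fin s → ℝ) (u : ℝ → ℝ) (atil a : Fin s → ℝ → ℝ)
    (n : ℕ) (F : ℕ → ℝ → ℝ) (hF : ∀ k, Differentiable ℝ (F k)) (t h α : ℝ) :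
    stageResidual s c u atil a (fun x => ∑ k ∈ Finset.range n, F k x) t h α
      = ∑ k ∈ Finset.range n, stageResidual s c u atil a (F k) t h α := by
  have hder : ∀ z : ℝ, deriv (fun x => ∑ k ∈ Finset.range n, F k x) z
      = ∑ k ∈ Finset.range n, deriv (F k) z := by
    intro z
    exact deriv_fun_sum (fun k _ => (hF k).differentiableAt)
  have key : ∀ (w : Fin s → ℝ → ℝ) (pt : Fin s → ℝ),
      (∑ j, w j α * ∑ k ∈ Finset.range n, deriv (F k) (pt j))
        = ∑ k ∈ Finset.range n, ∑ j, w j α * deriv (F k) (pt j) := by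
    intro w pt
    simp_rw [Finset.mul_sum]
    exact Finset.sum_comm
  simp only [stageResidual, hder]
  rw [key atil (fun j => t + (c j - 1) * h), key a (fun j => t + c j * h)]
  simp only [Finset.sum_sub_distrib, ← Finset.mul_sum]

lemma stageResidual_split (s : ℕ) (c : Fin s → ℝ) (u : ℝ → ℝ) (atil a : Fin s → ℝ → ℝ)
    (y P : ℝ → ℝ) (hy : Differentiable ℝ y) (hP : Differentiable ℝ P) (t h α : ℝ) :
    stageResidual s c u atil a y t h α
      = stageResidual s c u atil a P t h α
        + stageResidual s c u atil a (fun x => y x - P x) t h α := by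
  have hder : ∀ z : ℝ, deriv (fun x => y x - P x) z = deriv y z - deriv P z := by
    intro z
    exact deriv_sub (hy.differentiableAt) (hP.differentiableAt)
  simp only [stageResidual, hder]
  have e1 : ∀ j : Fin s, atil j α * deriv y (t + (c j - 1) * h)
      = atil j α * deriv P (t + (c j - 1) * h)
        + atil j α * (deriv y (t + (c j - 1) * h) - deriv P (t + (c j - 1) * h)) := by
    intro j; ring
  have e2 : ∀ j : Fin s, a j α * deriv y (t + c j * h)
      = a j α * deriv P (t + c j * h)
        + a j α * (deriv y (t + c j * h) - deriv P (t + c j * h)) := by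
    intro j; ring
  rw [Finset.sum_congr rfl (fun j _ => e1 j), Finset.sum_congr rfl (fun j _ => e2 j),
    Finset.sum_add_distrib, Finset.sum_add_distrib]
  ring

lemma stageResidual_const_mul_div (s : ℕ) (c : Fin s → ℝ) (u : ℝ → ℝ)
    (atil a : Fin s → ℝ → ℝ) (r q : ℝ) (f : ℝ → ℝ) (hf : Differentiable ℝ f) (t h α : ℝ) :
    stageResidual s c u atil a (fun x => r * f x / q) t h α
      = (r / q) * stageResidual s c u atil a f t h α := by
  have hder : ∀ z : ℝ, deriv (fun x => r * f x / q) z = r * deriv f z / q := by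
    intro z
    have : HasDerivAt (fun x => r * f x / q) (r * deriv f z / q) z :=
      ((hf.differentiableAt.hasDerivAt).const_mul r).div_const q
    exact this.deriv
  simp only [stageResidual, hder]
  have e1 : ∀ j : Fin s, atil j α * (r * deriv f (t + (c j - 1) * h) / q)
      = (r / q) * (atil j α * deriv f (t + (c j - 1) * h)) := fun j => by ring
  have e2 : ∀ j : Fin s, a j α * (r * deriv f (t + c j * h) / q)
      = (r / q) * (a j α * deriv f (t + c j * h)) := fun j => by ring
  rw [Finset.sum_congr rfl (fun j _ => e1 j), Finset.sum_congr rfl (fun j _ => e2 j),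
    ← Finset.mul_sum, ← Finset.mul_sum]
  ring

lemma residual_pow_zero (s : ℕ) (c : Fin s → ℝ) (u : ℝ → ℝ) (atil a : Fin s → ℝ → ℝ)
    (t h α : ℝ) :
    stageResidual s c u atil a (fun x => (x - t) ^ 0) t h α = 0 := by
  have hder : deriv (fun x : ℝ => (x - t) ^ 0) = fun _ => (0:ℝ) := by
    funext z; simp
  rw [stageResidual, hder]
  simp only [mul_zero, Finset.sum_const_zero, pow_zero]
  ring

lemma hasDerivAt_taylorP (n : ℕ) (d : ℕ → ℝ) (t x : ℝ) :
    HasDerivAt (fun z => ∑ k ∈ Finset.range (n+1), d k * (z - t) ^ k / (Nat.factorial k : ℝ))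
      (∑ k ∈ Finset.range n, d (k+1) * (x - t) ^ k / (Nat.factorial k : ℝ)) x := by
  have : HasDerivAt (fun z => ∑ k ∈ Finset.range (n+1), d k * (z - t) ^ k / (Nat.factorial k : ℝ))
      (∑ k ∈ Finset.range (n+1), d k * ((k:ℝ) * (x - t) ^ (k-1) * 1) / (Nat.factorial k : ℝ)) x := by
    apply HasDerivAt.fun_sum
    intro k _
    exact (((hasDerivAt_id x).sub_const t).pow k |>.const_mul (d k)).div_const _
  convert this using 1
  rw [Finset.sum_range_succ' (fun k => d k * ((k:ℝ) * (x - t) ^ (k-1) * 1) / (Nat.factorial k : ℝ))]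
  simp only [Nat.cast_zero, zero_mul, mul_zero, zero_div, add_zero, mul_one]
  apply Finset.sum_congr rfl
  intro k _
  have hfac : (Nat.factorial (k+1) : ℝ) = ((k:ℝ)+1) * (Nat.factorial k : ℝ) := by
    push_cast [Nat.factorial_succ]; ring
  rw [hfac]
  have h1 : (Nat.factorial k : ℝ) ≠ 0 := Nat.cast_ne_zero.2 (Nat.factorial_ne_zero k)
  have h2 : ((k:ℝ)+1) ≠ 0 := by positivity
  simp only [Nat.add_sub_cancel]
  push_cast
  field_simp

end ResidualHelpers

/-- Characterization of uniform stage order (Theorem 5): a TSRK method has uniform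
stage order `qt` (all stage residuals are `O(h^{qt+1})` uniformly, for every smooth `y`)
iff `Γ_{ik}` vanishes on `[0, c_i]` for all rows `i` and all `k = 1,…,qt`. -/
theorem tsrk_uniform_stage_order_characterization (s qt : ℕ) (hs : 1 ≤ s) (hq : 1 ≤ qt)
    (c : Fin (s + 1) → ℝ) (hc : ∀ i, 0 ≤ c i) (hcl : c (Fin.last s) = 1)
    (u : Fin (s + 1) → ℝ → ℝ) (atil a : Fin (s + 1) → Fin s → ℝ → ℝ)
    (hu : ∀ i, ∃ P : Polynomial ℝ, ∀ x, u i x = P.eval x)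
    (hatil : ∀ i j, ∃ P : Polynomial ℝ, ∀ x, atil i j x = P.eval x)
    (ha : ∀ i j, ∃ P : Polynomial ℝ, ∀ x, a i j x = P.eval x) :
    (∀ i : Fin (s + 1), ∀ k ∈ Finset.Icc 1 qt, ∀ α ∈ Set.Icc (0 : ℝ) (c i),
        GammaRow s (fun j => c j.castSucc) (u i) (atil i) (a i) k α = 0) ↔
    (∀ y : ℝ → ℝ, ContDiff ℝ (⊤ : ℕ∞) y → ∀ t : ℝ, ∃ C > 0, ∃ h₀ > 0,
        ∀ h ∈ Set.Ioc (0 : ℝ) h₀, ∀ i : Fin (s + 1), ∀ α ∈ Set.Icc (0 : ℝ) (c i),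
          |stageResidual s (fun j => c j.castSucc) (u i) (atil i) (a i) y t h α| ≤
            C * h ^ (qt + 1)) := by
  obtain ⟨m, rfl⟩ : ∃ m, qt = m + 1 := ⟨qt - 1, by omega⟩
  constructor
  · -- (a) → (b)
    intro hΓ y hy t
    -- continuity of the coefficient functions
    have hcont_u : ∀ i, Continuous (u i) := by
      intro i; obtain ⟨P, hP⟩ := hu i
      have : u i = fun x => P.eval x := funext hP
      rw [this]; exact P.continuous
    have hcont_atil : ∀ i j, Continuous (atil i j) := by
      intro i j; obtain ⟨P, hP⟩ := hatil i j
      have : atil i j = fun x => P.eval x := funext hP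
      rw [this]; exact P.continuous
    have hcont_a : ∀ i j, Continuous (a i j) := by
      intro i j; obtain ⟨P, hP⟩ := ha i j
      have : a i j = fun x => P.eval x := funext hP
      rw [this]; exact P.continuous
    -- a uniform bound B for all coefficient functions and abscissae
    have hBi : ∀ i : Fin (s+1), ∃ Bi : ℝ, ∀ β ∈ Set.Icc (0:ℝ) (c i),
        |u i β| ≤ Bi ∧ ∀ j, |atil i j β| ≤ Bi ∧ |a i j β| ≤ Bi := by
      intro i
      have hGc : ContinuousOn
          (fun β => |u i β| + ∑ j, (|atil i j β| + |a i j β|)) (Set.Icc (0:ℝ) (c i)) :=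
        (((hcont_u i).abs).add (continuous_finset_sum _ fun j _ =>
          ((hcont_atil i j).abs.add (hcont_a i j).abs))).continuousOn
      obtain ⟨Bi, hBi⟩ := isCompact_Icc.exists_bound_of_continuousOn hGc
      refine ⟨Bi, fun β hβ => ?_⟩
      have hGb : |u i β| + ∑ j, (|atil i j β| + |a i j β|) ≤ Bi :=
        le_trans (le_abs_self _) (by simpa [Real.norm_eq_abs] using hBi β hβ)
      have hsum_nonneg : (0:ℝ) ≤ ∑ j, (|atil i j β| + |a i j β|) :=
        Finset.sum_nonneg fun j _ => add_nonneg (abs_nonneg _) (abs_nonneg _)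
      refine ⟨by linarith [abs_nonneg (u i β)], fun j => ?_⟩
      have hterm : |atil i j β| + |a i j β| ≤ ∑ j', (|atil i j' β| + |a i j' β|) :=
        Finset.single_le_sum (f := fun j' => |atil i j' β| + |a i j' β|)
          (fun j' _ => add_nonneg (abs_nonneg _) (abs_nonneg _)) (Finset.mem_univ j)
      constructor
      · have := abs_nonneg (a i j β); have := abs_nonneg (u i β); linarith
      · have := abs_nonneg (atil i j β); have := abs_nonneg (u i β); linarith
    choose Bfun hBfun using hBi
    obtain ⟨B₀, hB₀⟩ := Finite.exists_le (fun i : Fin (s+1) => max (Bfun i) (c i))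
    set B : ℝ := max B₀ 1 with hBdef
    have hB1 : (1:ℝ) ≤ B := le_max_right _ _
    have hB0 : (0:ℝ) ≤ B := by linarith
    have hcB : ∀ i, c i ≤ B :=
      fun i => le_trans (le_trans (le_max_right _ _) (hB₀ i)) (le_max_left _ _)
    have hub : ∀ i, ∀ β ∈ Set.Icc (0:ℝ) (c i),
        |u i β| ≤ B ∧ ∀ j, |atil i j β| ≤ B ∧ |a i j β| ≤ B := by
      intro i β hβ
      have h1 := hBfun i β hβ
      have h2 : Bfun i ≤ B := le_trans (le_trans (le_max_left _ _) (hB₀ i)) (le_max_left _ _)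
      exact ⟨h1.1.trans h2, fun j => ⟨(h1.2 j).1.trans h2, (h1.2 j).2.trans h2⟩⟩
    -- Taylor bounds
    have hyinf : ContDiff ℝ ∞ y := hy.of_le (by simp)
    have hyd : ContDiff ℝ ∞ (deriv y) := (contDiff_infty_iff_deriv.1 hyinf).2
    obtain ⟨M₁, hM₁0, hM₁⟩ := taylor_shift (m+1) y hyinf t (B+1)
    obtain ⟨M₂, hM₂0, hM₂⟩ := taylor_shift m (deriv y) hyd t (B+1)
    set d : ℕ → ℝ := fun k => iteratedDeriv k y t with hd
    set P : ℝ → ℝ := fun x => ∑ k ∈ Finset.range (m+1+1),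
      d k * (x - t) ^ k / (Nat.factorial k : ℝ) with hPdef
    have hPdiff : Differentiable ℝ P := by
      rw [hPdef]
      exact fun x => (hasDerivAt_taylorP (m+1) d t x).differentiableAt
    have hydiff : Differentiable ℝ y := hy.differentiable (by simp)
    have hdP : ∀ z : ℝ, deriv P z
        = ∑ k ∈ Finset.range (m+1), d (k+1) * (z - t) ^ k / (Nat.factorial k : ℝ) := by
      intro z
      rw [hPdef]
      exact (hasDerivAt_taylorP (m+1) d t z).deriv
    have hgbound : ∀ x : ℝ, |x| ≤ B + 1 →
        |y (t+x) - P (t+x)| ≤ M₁ * |x| ^ (m+1+1) := by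
      intro x hx
      have h1 := hM₁ x hx
      have h2 : P (t+x) = ∑ k ∈ Finset.range (m+1+1),
          iteratedDeriv k y t * x ^ k / (Nat.factorial k : ℝ) := by
        rw [hPdef]
        exact Finset.sum_congr rfl fun k _ => by rw [add_sub_cancel_left, hd]
      rw [h2]; exact h1
    have hgderiv : ∀ x : ℝ, |x| ≤ B + 1 →
        |deriv y (t+x) - deriv P (t+x)| ≤ M₂ * |x| ^ (m+1) := by
      intro x hx
      have h1 := hM₂ x hx
      have h2 : ∀ k, iteratedDeriv k (deriv y) t = d (k+1) := by
        intro k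
        simp only [hd]
        rw [← iteratedDeriv_succ']
      simp_rw [h2] at h1
      rw [hdP]
      have h3 : ∑ k ∈ Finset.range (m+1), d (k+1) * (t + x - t) ^ k / (Nat.factorial k : ℝ)
          = ∑ k ∈ Finset.range (m+1), d (k+1) * x ^ k / (Nat.factorial k : ℝ) :=
        Finset.sum_congr rfl fun k _ => by rw [add_sub_cancel_left]
      rw [h3]; exact h1
    have hdg : ∀ z : ℝ, deriv (fun x => y x - P x) z = deriv y z - deriv P z :=
      fun z => deriv_sub hydiff.differentiableAt hPdiff.differentiableAt
    -- the constant
    refine ⟨M₁ * B^(m+1+1) + (1+B)*M₁ + 2*((s:ℝ) * (B * (M₂ * (B+1)^(m+1)))) + 1, ?_, 1,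
      one_pos, ?_⟩
    · have e1 : (0:ℝ) ≤ M₁ * B^(m+1+1) := mul_nonneg hM₁0 (pow_nonneg hB0 _)
      have e2 : (0:ℝ) ≤ (1+B)*M₁ := mul_nonneg (by linarith) hM₁0
      have e3 : (0:ℝ) ≤ (s:ℝ) * (B * (M₂ * (B+1)^(m+1))) :=
        mul_nonneg (Nat.cast_nonneg _) (mul_nonneg hB0 (mul_nonneg hM₂0
          (pow_nonneg (by linarith) _)))
      linarith
    intro h hh i α hα
    have h1 : 0 < h := hh.1
    have h2 : h ≤ 1 := hh.2
    have hα0 : 0 ≤ α := hα.1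
    have hαB : α ≤ B := hα.2.trans (hcB i)
    -- the polynomial part has zero residual
    have hFdiff : ∀ k, Differentiable ℝ
        (fun x => d k * (x - t) ^ k / (Nat.factorial k : ℝ)) := fun k =>
      (((differentiable_id.sub_const t).pow k).const_mul (d k)).div_const _
    have hEP : stageResidual s (fun j => c j.castSucc) (u i) (atil i) (a i) P t h α = 0 := by
      have hsum := stageResidual_sum s (fun j => c j.castSucc) (u i) (atil i) (a i)
        (m+1+1) (fun k x => d k * (x - t) ^ k / (Nat.factorial k : ℝ)) hFdiff t h α
      beta_reduce at hsum
      rw [hPdef, hsum]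
      apply Finset.sum_eq_zero
      intro k hk
      have hkle : k ≤ m + 1 := by
        have := Finset.mem_range.1 hk; omega
      match k, hkle with
      | 0, _ =>
        have hmul := stageResidual_const_mul_div s (fun j => c j.castSucc) (u i) (atil i)
          (a i) (d 0) (Nat.factorial 0 : ℝ) (fun x => (x - t) ^ 0)
          ((differentiable_id.sub_const t).pow 0) t h α
        beta_reduce at hmul
        rw [hmul, residual_pow_zero, mul_zero]
      | (m'+1), hkle =>
        have hmul := stageResidual_const_mul_div s (fun j => c j.castSucc) (u i) (atil i)
          (a i) (d (m'+1)) (Nat.factorial (m'+1) : ℝ) (fun x => (x - t) ^ (m'+1))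
          ((differentiable_id.sub_const t).pow (m'+1)) t h α
        beta_reduce at hmul
        rw [hmul, residual_monomial,
          hΓ i (m'+1) (Finset.mem_Icc.2 ⟨by omega, by omega⟩) α hα]
        ring
    rw [stageResidual_split s (fun j => c j.castSucc) (u i) (atil i) (a i) y P
      hydiff hPdiff t h α, hEP, zero_add]
    -- bound the residual of g = y - P
    simp only [stageResidual]
    simp only [hdg]
    -- individual bounds
    have hBb := hub i α hα
    have key1 : |y (t + α * h) - P (t + α * h)| ≤ M₁ * B^(m+1+1) * h^(m+1+1) := by
      have hxs : |α * h| ≤ B + 1 := by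
        rw [abs_of_nonneg (mul_nonneg hα0 h1.le)]
        nlinarith
      have := hgbound (α*h) hxs
      refine this.trans ?_
      have : |α * h| ^ (m+1+1) ≤ (B*h)^(m+1+1) := by
        apply pow_le_pow_left₀ (abs_nonneg _)
        rw [abs_of_nonneg (mul_nonneg hα0 h1.le)]
        exact mul_le_mul_of_nonneg_right hαB h1.le
      calc M₁ * |α*h|^(m+1+1) ≤ M₁ * (B*h)^(m+1+1) :=
            mul_le_mul_of_nonneg_left this hM₁0
        _ = M₁ * B^(m+1+1) * h^(m+1+1) := by rw [mul_pow]; ring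
    have key2 : |(1 - u i α) * (y (t - h) - P (t - h))| ≤ (1+B)*M₁ * h^(m+1+1) := by
      rw [abs_mul]
      have e1 : |1 - u i α| ≤ 1 + B := by
        calc |1 - u i α| ≤ |(1:ℝ)| + |u i α| := abs_sub _ _
          _ ≤ 1 + B := by rw [abs_one]; linarith [hBb.1]
      have e2 : |y (t - h) - P (t - h)| ≤ M₁ * h^(m+1+1) := by
        have ht : t - h = t + (-h) := by ring
        rw [ht]
        have := hgbound (-h) (by rw [abs_neg, abs_of_pos h1]; linarith)
        rwa [abs_neg, abs_of_pos h1] at this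
      calc |1 - u i α| * |y (t-h) - P (t-h)| ≤ (1+B) * (M₁ * h^(m+1+1)) := by
            apply mul_le_mul e1 e2 (abs_nonneg _) (by linarith)
        _ = (1+B)*M₁*h^(m+1+1) := by ring
    have key3 : u i α * (y t - P t) = 0 := by
      have h0 : |y (t+0) - P (t+0)| ≤ M₁ * |(0:ℝ)|^(m+1+1) := hgbound 0 (by simp; linarith)
      rw [add_zero] at h0
      simp only [abs_zero, zero_pow (by omega : m+1+1 ≠ 0), mul_zero] at h0
      have : y t - P t = 0 := abs_eq_zero.1 (le_antisymm h0 (abs_nonneg _))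
      rw [this, mul_zero]
    have keysum : ∀ (w : Fin s → ℝ → ℝ) (pts : Fin s → ℝ),
        (∀ j, |w j α| ≤ B) → (∀ j, |pts j - t| ≤ (B+1)*h) →
        |h * ∑ j, w j α * (deriv y (pts j) - deriv P (pts j))|
          ≤ (s:ℝ) * (B * (M₂ * (B+1)^(m+1))) * h^(m+1+1) := by
      intro w pts hw hpts
      rw [abs_mul, abs_of_pos h1]
      have hjb : ∀ j, |w j α * (deriv y (pts j) - deriv P (pts j))|
          ≤ B * (M₂ * ((B+1)*h)^(m+1)) := by
        intro j
        rw [abs_mul]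
        have hptj : |pts j - t| ≤ B + 1 := by nlinarith [hpts j]
        have hder : |deriv y (pts j) - deriv P (pts j)| ≤ M₂ * ((B+1)*h)^(m+1) := by
          have heq : pts j = t + (pts j - t) := by ring
          rw [heq]
          refine (hgderiv (pts j - t) hptj).trans ?_
          apply mul_le_mul_of_nonneg_left _ hM₂0
          exact pow_le_pow_left₀ (abs_nonneg _) (hpts j) _
        exact mul_le_mul (hw j) hder (abs_nonneg _) hB0
      have hsb : |∑ j, w j α * (deriv y (pts j) - deriv P (pts j))|
          ≤ (s:ℝ) * (B * (M₂ * ((B+1)*h)^(m+1))) := by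
        refine (Finset.abs_sum_le_sum_abs _ _).trans ?_
        calc (∑ j, |w j α * (deriv y (pts j) - deriv P (pts j))|)
            ≤ ∑ _j : Fin s, B * (M₂ * ((B+1)*h)^(m+1)) :=
              Finset.sum_le_sum fun j _ => hjb j
          _ = (s:ℝ) * (B * (M₂ * ((B+1)*h)^(m+1))) := by
              rw [Finset.sum_const, Finset.card_univ, Fintype.card_fin, nsmul_eq_mul]
      calc h * |∑ j, w j α * (deriv y (pts j) - deriv P (pts j))|
          ≤ h * ((s:ℝ) * (B * (M₂ * ((B+1)*h)^(m+1)))) :=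
            mul_le_mul_of_nonneg_left hsb h1.le
        _ = (s:ℝ) * (B * (M₂ * (B+1)^(m+1))) * h^(m+1+1) := by
            rw [mul_pow]; ring
    have key4 : |h * ∑ j, atil i j α *
        (deriv y (t + (c j.castSucc - 1) * h) - deriv P (t + (c j.castSucc - 1) * h))|
          ≤ (s:ℝ) * (B * (M₂ * (B+1)^(m+1))) * h^(m+1+1) := by
      apply keysum (atil i) (fun j => t + (c j.castSucc - 1) * h)
        (fun j => (hBb.2 j).1)
      intro j
      have : t + (c j.castSucc - 1) * h - t = (c j.castSucc - 1) * h := by ring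
      rw [this, abs_mul, abs_of_pos h1]
      apply mul_le_mul_of_nonneg_right _ h1.le
      calc |c j.castSucc - 1| ≤ |c j.castSucc| + |(1:ℝ)| := abs_sub _ _
        _ ≤ B + 1 := by
            rw [abs_one, abs_of_nonneg (hc _)]
            exact add_le_add_left (hcB _) 1
    have key5 : |h * ∑ j, a i j α *
        (deriv y (t + c j.castSucc * h) - deriv P (t + c j.castSucc * h))|
          ≤ (s:ℝ) * (B * (M₂ * (B+1)^(m+1))) * h^(m+1+1) := by
      apply keysum (a i) (fun j => t + c j.castSucc * h)
        (fun j => (hBb.2 j).2)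
      intro j
      have : t + c j.castSucc * h - t = c j.castSucc * h := by ring
      rw [this, abs_mul, abs_of_pos h1]
      apply mul_le_mul_of_nonneg_right _ h1.le
      rw [abs_of_nonneg (hc _)]
      linarith [hcB j.castSucc]
    -- combine
    rw [key3, sub_zero]
    have tri : ∀ A Bv D E : ℝ, |A - Bv - D - E| ≤ |A| + |Bv| + |D| + |E| := by
      intro A Bv D E
      have e : A - Bv - D - E = A + -Bv + -D + -E := by ring
      rw [e]
      calc |A + -Bv + -D + -E| ≤ |A + -Bv + -D| + |(-E)| := abs_add_le _ _
        _ ≤ |A + -Bv| + |(-D)| + |(-E)| := by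
            have := abs_add_le (A + -Bv) (-D); linarith
        _ ≤ |A| + |(-Bv)| + |(-D)| + |(-E)| := by
            have := abs_add_le A (-Bv); linarith
        _ = |A| + |Bv| + |D| + |E| := by rw [abs_neg, abs_neg, abs_neg]
    refine le_trans (tri _ _ _ _) ?_
    have hpow : (0:ℝ) ≤ h^(m+1+1) := pow_nonneg h1.le _
    have hpos : (0:ℝ) < h^(m+1+1) := pow_pos h1 _
    nlinarith [key1, key2, key4, key5]
  · -- (b) → (a)
    intro hres i k hk α hα
    rw [Finset.mem_Icc] at hk
    obtain ⟨m', rfl⟩ : ∃ m', k = m' + 1 := ⟨k - 1, by omega⟩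
    have hYc : ContDiff ℝ (⊤ : ℕ∞) (fun x : ℝ => (x - 0) ^ (m'+1)) :=
      (contDiff_id.sub contDiff_const).pow _
    obtain ⟨C, hC, h₀, hh₀, hbound⟩ := hres (fun x : ℝ => (x - 0) ^ (m'+1)) hYc 0
    set K := GammaRow s (fun j => c j.castSucc) (u i) (atil i) (a i) (m'+1) α with hK
    have hfacpos : (0:ℝ) < (Nat.factorial (m'+1) : ℝ) := by positivity
    have habs : ∀ h ∈ Set.Ioc (0:ℝ) (min h₀ 1),
        (Nat.factorial (m'+1) : ℝ) * |K| * h^(m'+1) ≤ C * h^(m'+1+1) := by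
      intro h hh
      have h1 : 0 < h := hh.1
      have hle : h ≤ h₀ := le_trans hh.2 (min_le_left _ _)
      have h2 : h ≤ 1 := le_trans hh.2 (min_le_right _ _)
      have hb := hbound h ⟨h1, hle⟩ i α hα
      rw [residual_monomial] at hb
      have e : |(-(Nat.factorial (m'+1) : ℝ)) * K * h ^ (m'+1)|
          = (Nat.factorial (m'+1) : ℝ) * |K| * h^(m'+1) := by
        rw [abs_mul, abs_mul, abs_neg, abs_pow, abs_of_pos h1,
          abs_of_nonneg (Nat.cast_nonneg _)]
      rw [← hK, e] at hb
      refine hb.trans ?_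
      apply mul_le_mul_of_nonneg_left _ hC.le
      exact pow_le_pow_of_le_one h1.le h2 (by omega)
    by_contra hKne
    have hKpos : 0 < |K| := abs_pos.2 hKne
    set h : ℝ := min (min h₀ 1) ((Nat.factorial (m'+1) : ℝ) * |K| / (2 * C)) with hhdef
    have hhpos : 0 < h := lt_min (lt_min hh₀ one_pos) (by positivity)
    have hmain := habs h ⟨hhpos, min_le_left _ _⟩
    have hpow : (0:ℝ) < h^(m'+1) := pow_pos hhpos _
    have hmain2 : (Nat.factorial (m'+1) : ℝ) * |K| ≤ C * h := by
      have hr : C * h^(m'+1+1) = (C * h) * h^(m'+1) := by ring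
      rw [hr] at hmain
      exact le_of_mul_le_mul_right hmain hpow
    have hle2 : h ≤ (Nat.factorial (m'+1) : ℝ) * |K| / (2 * C) := min_le_right _ _
    have hend : C * h ≤ (Nat.factorial (m'+1) : ℝ) * |K| / 2 := by
      calc C * h ≤ C * ((Nat.factorial (m'+1) : ℝ) * |K| / (2 * C)) :=
            mul_le_mul_of_nonneg_left hle2 hC.le
        _ = (Nat.factorial (m'+1) : ℝ) * |K| / 2 := by
            field_simp
    nlinarith [mul_pos hfacpos hKpos]
end

section
/- Order q̃+1 from stage order q̃ (consistency form of Theorem 6): Fix an integer s ≥ 1 and abscissae c_1, …, c_s ∈ ℝ with c_i ≥ 0, and set c_{s+1} := 1. A TSRK tableau consists of polynomial coefficient functions u_i : ℝ → ℝ and ã_{ij}, a_{ij} : ℝ → ℝ for i = 1, …, s+1 and j = 1, …, s. For integers k ≥ 1 define the polynomial Γ_{ik}(α) := (1/(k−1)!)·[ (1−u_i(α))·(−1)^k/k + Σ_{j=1}^{s} ã_{ij}(α)·(−(1−c_j))^{k−1} + Σ_{j=1}^{s} a_{ij}(α)·c_j^{k−1} − α^k/k ], and write Γ_k := Γ_{s+1,k}.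 For a differentiable function y : ℝ → ℝ, t ∈ ℝ, h > 0, α ∈ [0,1], define the output residual E_{s+1}(y, t, h, α) := y(t+αh) − (1−u_{s+1}(α))·y(t−h) − u_{s+1}(α)·y(t) − h·Σ_{j=1}^{s} ã_{s+1,j}(α)·y′(t+(c_j−1)h) − h·Σ_{j=1}^{s} a_{s+1,j}(α)·y′(t+c_j·h). Let q̃ ≥ 1 and suppose Γ_k(α) = 0 for all k = 1,…,q̃ and all α ∈ [0,1]. Then the following are equivalent: (a) Γ_{q̃+1}(α) = 0 for all α ∈ [0,1]; (b) for every infinitely differentiable y : ℝ → ℝ and every t ∈ ℝ there exist C > 0, h₀ > 0 with sup_{α∈[0,1]} |E_{s+1}(y,t,h,α)| ≤ C·h^{q̃+2} for all h ∈ (0,h₀]. -/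
open Finset


/-- Taylor polynomial of `f` at `t` of degree `N`. -/
noncomputable def tpoly (f : ℝ → ℝ) (t : ℝ) (N : ℕ) (x : ℝ) : ℝ :=
  ∑ k ∈ Finset.range (N + 1), iteratedDeriv k f t * ((x - t) ^ k / (Nat.factorial k : ℝ))

lemma tpoly_hasDerivAt (f : ℝ → ℝ) (t : ℝ) (N : ℕ) (x : ℝ) :
    HasDerivAt (tpoly f t N)
      (∑ k ∈ Finset.range N, iteratedDeriv (k + 1) f t * ((x - t) ^ k / (Nat.factorial k : ℝ))) x := by
  have H : HasDerivAt (tpoly f t N)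
      (∑ k ∈ Finset.range (N + 1),
        iteratedDeriv k f t * ((k : ℝ) * (x - t) ^ (k - 1) / (Nat.factorial k : ℝ))) x := by
    apply HasDerivAt.fun_sum
    intro k _
    have h1 : HasDerivAt (fun x : ℝ => (x - t) ^ k) ((k : ℝ) * (x - t) ^ (k - 1) * 1) x :=
      ((hasDerivAt_id' x).sub_const t).pow k
    have h2 := (h1.div_const (Nat.factorial k : ℝ)).const_mul (iteratedDeriv k f t)
    convert h2 using 1
    · rfl
    ring
  convert H using 1
  rw [Finset.sum_range_succ' (fun k => iteratedDeriv k f t * ((k:ℝ) * (x - t) ^ (k - 1) / (Nat.factorial k : ℝ))) N]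
  simp only [Nat.cast_zero, Nat.factorial_zero, Nat.cast_one, zero_mul, zero_div,
    mul_zero, add_zero]
  apply Finset.sum_congr rfl
  intro k _
  have : ((k + 1 : ℕ) : ℝ) ≠ 0 := by positivity
  rw [Nat.factorial_succ]
  push_cast [Nat.add_sub_cancel]
  field_simp

lemma tpoly_self (f : ℝ → ℝ) (t : ℝ) (N : ℕ) : tpoly f t N t = f t := by
  unfold tpoly
  rw [Finset.sum_eq_single 0]
  · simp
  · intro k _ hk
    simp [zero_pow hk]
  · simp

lemma tpoly_deriv_succ (f : ℝ → ℝ) (t : ℝ) (N : ℕ) (x : ℝ) :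
    deriv (tpoly f t (N + 1)) x = tpoly (deriv f) t N x := by
  rw [(tpoly_hasDerivAt f t (N + 1) x).deriv]
  unfold tpoly
  apply Finset.sum_congr rfl
  intro k _
  rw [iteratedDeriv_succ']

/-- Uniform Taylor remainder bound on a ball. -/
lemma taylor_bound (t r : ℝ) : ∀ (N : ℕ) (f : ℝ → ℝ), ContDiff ℝ ((⊤:ℕ∞):WithTop ℕ∞) f →
    ∃ M : ℝ, 0 ≤ M ∧ ∀ x : ℝ, |x - t| ≤ r →
      |f x - tpoly f t N x| ≤ M * |x - t| ^ (N + 1) := by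
  intro N
  induction N with
  | zero =>
    intro f hf
    obtain ⟨M, hM⟩ := (isCompact_closedBall t r).exists_bound_of_continuousOn
      ((hf.continuous_deriv (by norm_num)).continuousOn (s := Metric.closedBall t r))
    refine ⟨max M 0, le_max_right _ _, ?_⟩
    intro x hx
    have hball : x ∈ Metric.closedBall t r := by
      simp [Metric.mem_closedBall, Real.dist_eq, hx]
    have ht : t ∈ Metric.closedBall t r := by
      simp [Metric.mem_closedBall]
      linarith [abs_nonneg (x - t), hx]
    have h0 : tpoly f t 0 x = f t := by simp [tpoly]
    rw [h0, pow_one]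
    have := Convex.norm_image_sub_le_of_norm_deriv_le
      (fun u _ => (hf.differentiable (by norm_num)).differentiableAt)
      (fun u hu => le_trans (hM u hu) (le_max_left M 0))
      (convex_closedBall t r) ht hball
    simpa [Real.norm_eq_abs] using this
  | succ n ih =>
    intro f hf
    obtain ⟨M, hM0, hM⟩ := ih (deriv f) (contDiff_infty_iff_deriv.mp hf).2
    refine ⟨M, hM0, ?_⟩
    intro x hx
    set g : ℝ → ℝ := fun u => f u - tpoly f t (n + 1) u with hg
    have hgdiff : ∀ u : ℝ, DifferentiableAt ℝ g u := fun u =>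
      ((hf.differentiable (by norm_num)).differentiableAt).sub (tpoly_hasDerivAt f t (n+1) u).differentiableAt
    have hgderiv : ∀ u : ℝ, deriv g u = deriv f u - tpoly (deriv f) t n u := by
      intro u
      rw [hg]
      rw [deriv_fun_sub ((hf.differentiable (by norm_num)).differentiableAt)
        (tpoly_hasDerivAt f t (n+1) u).differentiableAt, tpoly_deriv_succ]
    have key : ∀ u ∈ Metric.closedBall t |x - t|, ‖deriv g u‖ ≤ M * |x - t| ^ (n + 1) := by
      intro u hu
      rw [Metric.mem_closedBall, Real.dist_eq] at hu
      rw [hgderiv, Real.norm_eq_abs]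
      calc |deriv f u - tpoly (deriv f) t n u| ≤ M * |u - t| ^ (n + 1) :=
            hM u (le_trans hu (le_trans (le_abs_self _) (by rwa [abs_abs])))
        _ ≤ M * |x - t| ^ (n + 1) := by
            apply mul_le_mul_of_nonneg_left _ hM0
            exact pow_le_pow_left₀ (abs_nonneg _) hu _
    have hxball : x ∈ Metric.closedBall t |x - t| := by
      simp [Metric.mem_closedBall, Real.dist_eq]
    have htball : t ∈ Metric.closedBall t |x - t| := by
      simp [Metric.mem_closedBall]
    have hgt : g t = 0 := by simp [hg, tpoly_self]
    have := Convex.norm_image_sub_le_of_norm_deriv_le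
      (fun u _ => hgdiff u) key (convex_closedBall t |x - t|) htball hxball
    rw [hgt, sub_zero, Real.norm_eq_abs, Real.norm_eq_abs] at this
    calc |f x - tpoly f t (n+1) x| = |g x| := rfl
      _ ≤ M * |x - t| ^ (n + 1) * |x - t| := this
      _ = M * |x - t| ^ (n + 1 + 1) := by ring
variable {s : ℕ} {c : Fin s → ℝ} {v : ℝ → ℝ} {btil b : Fin s → ℝ → ℝ}

lemma residual_add (f g : ℝ → ℝ) (hf : Differentiable ℝ f) (hg : Differentiable ℝ g)
    (t h α : ℝ) :
    stageResidual s c v btil b (fun x => f x + g x) t h α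
      = stageResidual s c v btil b f t h α + stageResidual s c v btil b g t h α := by
  unfold stageResidual
  have hd : ∀ p : ℝ, deriv (fun x => f x + g x) p = deriv f p + deriv g p :=
    fun p => deriv_add (hf p) (hg p)
  simp only [hd, mul_add, Finset.sum_add_distrib]
  ring

lemma residual_smul (a : ℝ) (f : ℝ → ℝ) (hf : Differentiable ℝ f) (t h α : ℝ) :
    stageResidual s c v btil b (fun x => a * f x) t h α
      = a * stageResidual s c v btil b f t h α := by
  unfold stageResidual
  have hd : ∀ p : ℝ, deriv (fun x => a * f x) p = a * deriv f p :=
    fun p => deriv_const_mul a (hf p)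
  have e1 : ∀ (w : Fin s → ℝ) (pt : Fin s → ℝ),
      ∑ j, w j * (a * pt j) = a * ∑ j, w j * pt j := by
    intro w pt
    rw [Finset.mul_sum]
    exact Finset.sum_congr rfl fun j _ => by ring
  simp only [hd, e1]
  ring

lemma mono_differentiable (t : ℝ) (m : ℕ) :
    Differentiable ℝ (fun x : ℝ => (x - t) ^ m / (Nat.factorial m : ℝ)) := by
  intro u
  exact ((((hasDerivAt_id' u).sub_const t).pow m).div_const _).differentiableAt

lemma residual_mono_zero (t h α : ℝ) :
    stageResidual s c v btil b (fun x : ℝ => (x - t) ^ 0 / (Nat.factorial 0 : ℝ)) t h α = 0 := by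
  unfold stageResidual
  have hd : ∀ p : ℝ, deriv (fun x : ℝ => (x - t) ^ 0 / (Nat.factorial 0 : ℝ)) p = 0 := by
    intro p
    rw [((((hasDerivAt_id' p).sub_const t).fun_pow 0).div_const _).deriv]
    simp
  simp [hd]

lemma residual_mono (m : ℕ) (t h α : ℝ) :
    stageResidual s c v btil b (fun x : ℝ => (x - t) ^ (m + 1) / (Nat.factorial (m + 1) : ℝ)) t h α
      = -(GammaRow s c v btil b (m + 1) α) * h ^ (m + 1) := by
  unfold stageResidual GammaRow
  have hd : ∀ p : ℝ, deriv (fun x : ℝ => (x - t) ^ (m + 1) / (Nat.factorial (m + 1) : ℝ)) p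
      = (p - t) ^ m / (Nat.factorial m : ℝ) := by
    intro p
    rw [((((hasDerivAt_id' p).sub_const t).fun_pow (m + 1)).div_const _).deriv]
    rw [Nat.factorial_succ]
    have h1 : ((m + 1 : ℕ) : ℝ) ≠ 0 := by positivity
    have h2 : (Nat.factorial m : ℝ) ≠ 0 := by positivity
    push_cast [Nat.add_sub_cancel]
    field_simp
  simp only [hd]
  have e1 : ∀ j : Fin s, t + (c j - 1) * h - t = (c j - 1) * h := fun j => by ring
  have e2 : ∀ j : Fin s, t + c j * h - t = c j * h := fun j => by ring
  have e3 : t + α * h - t = α * h := by ring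
  have e4 : t - h - t = -h := by ring
  simp only [e1, e2, e3, e4, sub_self, zero_pow (Nat.succ_ne_zero m), zero_div, mul_zero]
  have S1 : ∑ j, btil j α * (((c j - 1) * h) ^ m / (Nat.factorial m : ℝ))
      = (h ^ m / (Nat.factorial m : ℝ)) * ∑ j, btil j α * (c j - 1) ^ m := by
    rw [Finset.mul_sum]; exact Finset.sum_congr rfl fun j _ => by rw [mul_pow]; ring
  have S2 : ∑ j, b j α * ((c j * h) ^ m / (Nat.factorial m : ℝ))
      = (h ^ m / (Nat.factorial m : ℝ)) * ∑ j, b j α * (c j) ^ m := by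
    rw [Finset.mul_sum]; exact Finset.sum_congr rfl fun j _ => by rw [mul_pow]; ring
  rw [S1, S2]
  have e5 : ∀ j : Fin s, -(1 - c j) = c j - 1 := fun j => neg_sub _ _
  simp only [Nat.add_sub_cancel, e5]
  have h1 : ((m + 1 : ℕ) : ℝ) ≠ 0 := by positivity
  have h2 : (Nat.factorial m : ℝ) ≠ 0 := by positivity
  have e6 : (α * h) ^ (m + 1) = α ^ (m + 1) * h ^ (m + 1) := mul_pow _ _ _
  have e7 : (-h : ℝ) ^ (m + 1) = (-1) ^ (m + 1) * h ^ (m + 1) := by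
    rw [← neg_one_mul, mul_pow]
  rw [e6, e7]
  rw [Nat.factorial_succ]
  push_cast
  field_simp
  ring
lemma residual_sub (f g : ℝ → ℝ) (hf : Differentiable ℝ f) (hg : Differentiable ℝ g)
    (t h α : ℝ) :
    stageResidual s c v btil b (fun x => f x - g x) t h α
      = stageResidual s c v btil b f t h α - stageResidual s c v btil b g t h α := by
  unfold stageResidual
  have hd : ∀ p : ℝ, deriv (fun x => f x - g x) p = deriv f p - deriv g p :=
    fun p => deriv_sub (hf p) (hg p)
  simp only [hd, mul_sub, Finset.sum_sub_distrib]
  ring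

lemma tpoly_differentiable (f : ℝ → ℝ) (t : ℝ) (N : ℕ) : Differentiable ℝ (tpoly f t N) :=
  fun u => (tpoly_hasDerivAt f t N u).differentiableAt

lemma residual_tpoly (y : ℝ → ℝ) (t h α : ℝ) : ∀ N : ℕ,
    stageResidual s c v btil b (tpoly y t N) t h α
      = -∑ k ∈ Finset.range N,
          iteratedDeriv (k + 1) y t * (GammaRow s c v btil b (k + 1) α * h ^ (k + 1)) := by
  intro N
  induction N with
  | zero =>
    have e : tpoly y t 0 = fun x => iteratedDeriv 0 y t * ((x - t) ^ 0 / (Nat.factorial 0 : ℝ)) := by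
      funext x; simp [tpoly]
    rw [e, residual_smul _ _ (mono_differentiable t 0), residual_mono_zero]
    simp
  | succ N ih =>
    have e : tpoly y t (N + 1) = fun x => tpoly y t N x
        + iteratedDeriv (N + 1) y t * ((x - t) ^ (N + 1) / (Nat.factorial (N + 1) : ℝ)) := by
      funext x; rw [tpoly, Finset.sum_range_succ]; rfl
    rw [e, residual_add _ _ (tpoly_differentiable y t N)
        ((mono_differentiable t (N + 1)).const_mul _),
      residual_smul _ _ (mono_differentiable t (N + 1)), residual_mono, ih,
      Finset.sum_range_succ]
    ring
lemma poly_bound (f : ℝ → ℝ) (hf : ∃ P : Polynomial ℝ, ∀ x, f x = P.eval x) :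
    ∃ B : ℝ, 0 ≤ B ∧ ∀ α ∈ Set.Icc (0 : ℝ) 1, |f α| ≤ B := by
  obtain ⟨P, hP⟩ := hf
  obtain ⟨B, hB⟩ := (isCompact_Icc (a := (0 : ℝ)) (b := 1)).exists_bound_of_continuousOn
    P.continuous.continuousOn
  refine ⟨max B 0, le_max_right _ _, fun α hα => ?_⟩
  rw [hP]
  exact le_trans (hB α hα) (le_max_left _ _)


/-- Order `q̃ + 1` from stage order `q̃` (consistency form of Theorem 6): if
the output-row order polynomials `Γ_k` vanish on `[0,1]` for `k = 1,…,q̃`, then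
`Γ_{q̃+1}` vanishes on `[0,1]` iff the output residual is `O(h^{q̃+2})` uniformly
for every smooth `y`. Here `v = u_{s+1}`, `b̃_j = ã_{s+1,j}`, `b_j = a_{s+1,j}`. -/
theorem tsrk_order_from_stage_order (s qt : ℕ) (hs : 1 ≤ s) (hq : 1 ≤ qt)
    (c : Fin s → ℝ) (hc : ∀ j, 0 ≤ c j)
    (v : ℝ → ℝ) (btil b : Fin s → ℝ → ℝ)
    (hv : ∃ P : Polynomial ℝ, ∀ x, v x = P.eval x)
    (hbtil : ∀ j, ∃ P : Polynomial ℝ, ∀ x, btil j x = P.eval x)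
    (hb : ∀ j, ∃ P : Polynomial ℝ, ∀ x, b j x = P.eval x)
    (hstage : ∀ k ∈ Finset.Icc 1 qt, ∀ α ∈ Set.Icc (0 : ℝ) 1,
      GammaRow s c v btil b k α = 0) :
    (∀ α ∈ Set.Icc (0 : ℝ) 1, GammaRow s c v btil b (qt + 1) α = 0) ↔
    (∀ y : ℝ → ℝ, ContDiff ℝ (⊤ : ℕ∞) y → ∀ t : ℝ, ∃ C > 0, ∃ h₀ > 0,
        ∀ h ∈ Set.Ioc (0 : ℝ) h₀, ∀ α ∈ Set.Icc (0 : ℝ) 1,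
          |stageResidual s c v btil b y t h α| ≤ C * h ^ (qt + 2)) := by
  constructor
  · -- Γ_{qt+1} = 0 → O(h^{qt+2})
    intro hΓ y hy t
    have hyI : ContDiff ℝ ((⊤ : ℕ∞) : WithTop ℕ∞) y := hy.of_le (by simp)
    have hy' : Differentiable ℝ y := hyI.differentiable (by norm_num)
    have hdyI : ContDiff ℝ ((⊤ : ℕ∞) : WithTop ℕ∞) (deriv y) :=
      (contDiff_infty_iff_deriv.mp hyI).2
    set r : ℝ := 1 + ∑ j, c j with hrdef
    have hcs : (0 : ℝ) ≤ ∑ j, c j := Finset.sum_nonneg fun j _ => hc j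
    have hr1 : 1 ≤ r := by simp only [hrdef]; linarith
    have hr0 : 0 < r := by linarith
    obtain ⟨M₁, hM₁0, hM₁⟩ := taylor_bound t r (qt + 1) y hyI
    obtain ⟨M₂, hM₂0, hM₂⟩ := taylor_bound t r qt (deriv y) hdyI
    obtain ⟨Bv, hBv0, hBv⟩ := poly_bound v hv
    choose Bt hBt0 hBt using fun j => poly_bound (btil j) (hbtil j)
    choose Bb hBb0 hBb using fun j => poly_bound (b j) (hb j)
    have hBtS : (0 : ℝ) ≤ ∑ j, Bt j := Finset.sum_nonneg fun j _ => hBt0 j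
    have hBbS : (0 : ℝ) ≤ ∑ j, Bb j := Finset.sum_nonneg fun j _ => hBb0 j
    have hrp : (0 : ℝ) < r ^ (qt + 1) := pow_pos hr0 _
    set C₀ : ℝ := M₁ + (1 + Bv) * M₁
        + ((∑ j, Bt j) + (∑ j, Bb j)) * (M₂ * r ^ (qt + 1)) with hC₀def
    have hC₀0 : 0 ≤ C₀ := by
      have h1 : 0 ≤ (1 + Bv) * M₁ := mul_nonneg (by linarith) hM₁0
      have h2 : 0 ≤ ((∑ j, Bt j) + (∑ j, Bb j)) * (M₂ * r ^ (qt + 1)) :=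
        mul_nonneg (by linarith) (mul_nonneg hM₂0 hrp.le)
      simp only [hC₀def]; linarith
    refine ⟨C₀ + 1, by linarith, 1, one_pos, ?_⟩
    intro h hh α hα
    obtain ⟨hh0, hh1⟩ := hh
    obtain ⟨hα0, hα1⟩ := hα
    set g : ℝ → ℝ := fun x => y x - tpoly y t (qt + 1) x with hgdef
    have hgdiff : Differentiable ℝ g := hy'.sub (tpoly_differentiable y t (qt + 1))
    -- split the residual
    have split : stageResidual s c v btil b y t h α = stageResidual s c v btil b g t h α := by
      have e : y = fun x => g x + tpoly y t (qt + 1) x := by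
        funext x; simp [hgdef]
      nth_rewrite 1 [e]
      rw [residual_add _ _ hgdiff (tpoly_differentiable y t (qt + 1)),
        residual_tpoly]
      have hz : ∀ k ∈ Finset.range (qt + 1),
          iteratedDeriv (k + 1) y t * (GammaRow s c v btil b (k + 1) α * h ^ (k + 1)) = 0 := by
        intro k hk
        have hk' : k < qt + 1 := Finset.mem_range.mp hk
        have hΓ0 : GammaRow s c v btil b (k + 1) α = 0 := by
          rcases Nat.lt_or_ge (k + 1) (qt + 1) with hlt | hge
          · exact hstage (k + 1) (Finset.mem_Icc.mpr ⟨Nat.le_add_left 1 k, by omega⟩)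
              α ⟨hα0, hα1⟩
          · have : k + 1 = qt + 1 := by omega
            rw [this]; exact hΓ α ⟨hα0, hα1⟩
        rw [hΓ0]; ring
      rw [Finset.sum_eq_zero hz]
      ring
    rw [split]
    -- remainder bounds
    have hgt : g t = 0 := by simp [hgdef, tpoly_self]
    have hgderiv : ∀ p : ℝ, deriv g p = deriv y p - tpoly (deriv y) t qt p := by
      intro p
      rw [hgdef]
      rw [deriv_fun_sub (hy' p) (tpoly_differentiable y t (qt + 1) p), tpoly_deriv_succ]
    have hgb : ∀ x : ℝ, |x - t| ≤ r → |g x| ≤ M₁ * |x - t| ^ (qt + 2) := by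
      intro x hx
      have := hM₁ x hx
      simpa [hgdef] using this
    have hg'b : ∀ x : ℝ, |x - t| ≤ r → |deriv g x| ≤ M₂ * |x - t| ^ (qt + 1) := by
      intro x hx
      rw [hgderiv]
      exact hM₂ x hx
    have hcj : ∀ j : Fin s, c j ≤ r - 1 := by
      intro j
      have := Finset.single_le_sum (f := c) (fun i _ => hc i) (Finset.mem_univ j)
      simp only [hrdef]; linarith
    -- term 1 : |g (t + α h)|
    have habs1 : |t + α * h - t| ≤ h := by
      have : t + α * h - t = α * h := by ring
      rw [this, abs_of_nonneg (by positivity)]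
      nlinarith
    have hT1 : |g (t + α * h)| ≤ M₁ * h ^ (qt + 2) := by
      calc |g (t + α * h)| ≤ M₁ * |t + α * h - t| ^ (qt + 2) :=
            hgb _ (le_trans habs1 (by linarith))
        _ ≤ M₁ * h ^ (qt + 2) := by
            apply mul_le_mul_of_nonneg_left _ hM₁0
            exact pow_le_pow_left₀ (abs_nonneg _) habs1 _
    -- term 2 : |(1 - v α) g (t - h)|
    have habs2 : |t - h - t| ≤ h := by
      have : t - h - t = -h := by ring
      rw [this, abs_neg, abs_of_nonneg hh0.le]
    have hT2 : |(1 - v α) * g (t - h)| ≤ (1 + Bv) * (M₁ * h ^ (qt + 2)) := by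
      rw [abs_mul]
      apply mul_le_mul
      · calc |1 - v α| ≤ |(1 : ℝ)| + |v α| := abs_sub _ _
          _ ≤ 1 + Bv := by
              have := hBv α ⟨hα0, hα1⟩
              simp only [abs_one]; linarith
      · calc |g (t - h)| ≤ M₁ * |t - h - t| ^ (qt + 2) :=
              hgb _ (le_trans habs2 (by linarith))
          _ ≤ M₁ * h ^ (qt + 2) := by
              apply mul_le_mul_of_nonneg_left _ hM₁0
              exact pow_le_pow_left₀ (abs_nonneg _) habs2 _
      · exact abs_nonneg _
      · linarith
    -- stage-derivative bounds
    have hderivpt : ∀ (d : ℝ), |d| ≤ r →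
        |deriv g (t + d * h)| ≤ M₂ * r ^ (qt + 1) * h ^ (qt + 1) := by
      intro d hd
      have habs : |t + d * h - t| ≤ r * h := by
        have e : t + d * h - t = d * h := by ring
        rw [e, abs_mul, abs_of_nonneg hh0.le]
        exact mul_le_mul_of_nonneg_right hd hh0.le
      have hrh : r * h ≤ r := by nlinarith
      calc |deriv g (t + d * h)| ≤ M₂ * |t + d * h - t| ^ (qt + 1) :=
            hg'b _ (le_trans habs hrh)
        _ ≤ M₂ * (r * h) ^ (qt + 1) := by
            apply mul_le_mul_of_nonneg_left _ hM₂0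
            exact pow_le_pow_left₀ (abs_nonneg _) habs _
        _ = M₂ * r ^ (qt + 1) * h ^ (qt + 1) := by rw [mul_pow]; ring
    have hT3 : |h * ∑ j, btil j α * deriv g (t + (c j - 1) * h)|
        ≤ (∑ j, Bt j) * (M₂ * r ^ (qt + 1)) * h ^ (qt + 2) := by
      rw [abs_mul, abs_of_nonneg hh0.le]
      have hsum : |∑ j, btil j α * deriv g (t + (c j - 1) * h)|
          ≤ (∑ j, Bt j) * (M₂ * r ^ (qt + 1) * h ^ (qt + 1)) := by
        calc |∑ j, btil j α * deriv g (t + (c j - 1) * h)|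
            ≤ ∑ j, |btil j α * deriv g (t + (c j - 1) * h)| :=
              Finset.abs_sum_le_sum_abs _ _
          _ ≤ ∑ j, Bt j * (M₂ * r ^ (qt + 1) * h ^ (qt + 1)) := by
              apply Finset.sum_le_sum
              intro j _
              rw [abs_mul]
              apply mul_le_mul (hBt j α ⟨hα0, hα1⟩) _ (abs_nonneg _) (hBt0 j)
              apply hderivpt
              rw [abs_le]
              constructor
              · have := hc j; linarith
              · have := hcj j; linarith
          _ = (∑ j, Bt j) * (M₂ * r ^ (qt + 1) * h ^ (qt + 1)) := by
              rw [← Finset.sum_mul]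
      calc h * |∑ j, btil j α * deriv g (t + (c j - 1) * h)|
          ≤ h * ((∑ j, Bt j) * (M₂ * r ^ (qt + 1) * h ^ (qt + 1))) :=
            mul_le_mul_of_nonneg_left hsum hh0.le
        _ = (∑ j, Bt j) * (M₂ * r ^ (qt + 1)) * h ^ (qt + 2) := by ring
    have hT4 : |h * ∑ j, b j α * deriv g (t + c j * h)|
        ≤ (∑ j, Bb j) * (M₂ * r ^ (qt + 1)) * h ^ (qt + 2) := by
      rw [abs_mul, abs_of_nonneg hh0.le]
      have hsum : |∑ j, b j α * deriv g (t + c j * h)|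
          ≤ (∑ j, Bb j) * (M₂ * r ^ (qt + 1) * h ^ (qt + 1)) := by
        calc |∑ j, b j α * deriv g (t + c j * h)|
            ≤ ∑ j, |b j α * deriv g (t + c j * h)| :=
              Finset.abs_sum_le_sum_abs _ _
          _ ≤ ∑ j, Bb j * (M₂ * r ^ (qt + 1) * h ^ (qt + 1)) := by
              apply Finset.sum_le_sum
              intro j _
              rw [abs_mul]
              apply mul_le_mul (hBb j α ⟨hα0, hα1⟩) _ (abs_nonneg _) (hBb0 j)
              apply hderivpt
              rw [abs_le]
              constructor
              · have := hc j; linarith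
              · have := hcj j; linarith
          _ = (∑ j, Bb j) * (M₂ * r ^ (qt + 1) * h ^ (qt + 1)) := by
              rw [← Finset.sum_mul]
      calc h * |∑ j, b j α * deriv g (t + c j * h)|
          ≤ h * ((∑ j, Bb j) * (M₂ * r ^ (qt + 1) * h ^ (qt + 1))) :=
            mul_le_mul_of_nonneg_left hsum hh0.le
        _ = (∑ j, Bb j) * (M₂ * r ^ (qt + 1)) * h ^ (qt + 2) := by ring
    -- assemble
    have hps : (0 : ℝ) ≤ h ^ (qt + 2) := by positivity
    unfold stageResidual
    rw [hgt, mul_zero, sub_zero]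
    calc |g (t + α * h) - (1 - v α) * g (t - h)
          - h * ∑ j, btil j α * deriv g (t + (c j - 1) * h)
          - h * ∑ j, b j α * deriv g (t + c j * h)|
        ≤ |g (t + α * h) - (1 - v α) * g (t - h)
          - h * ∑ j, btil j α * deriv g (t + (c j - 1) * h)|
          + |h * ∑ j, b j α * deriv g (t + c j * h)| := by
          exact abs_sub _ _
      _ ≤ |g (t + α * h) - (1 - v α) * g (t - h)|
          + |h * ∑ j, btil j α * deriv g (t + (c j - 1) * h)|
          + |h * ∑ j, b j α * deriv g (t + c j * h)| := by
          have := abs_sub (g (t + α * h) - (1 - v α) * g (t - h))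
            (h * ∑ j, btil j α * deriv g (t + (c j - 1) * h))
          linarith
      _ ≤ |g (t + α * h)| + |(1 - v α) * g (t - h)|
          + |h * ∑ j, btil j α * deriv g (t + (c j - 1) * h)|
          + |h * ∑ j, b j α * deriv g (t + c j * h)| := by
          have := abs_sub (g (t + α * h)) ((1 - v α) * g (t - h))
          linarith
      _ ≤ M₁ * h ^ (qt + 2) + (1 + Bv) * (M₁ * h ^ (qt + 2))
          + (∑ j, Bt j) * (M₂ * r ^ (qt + 1)) * h ^ (qt + 2)
          + (∑ j, Bb j) * (M₂ * r ^ (qt + 1)) * h ^ (qt + 2) := by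
          linarith
      _ = C₀ * h ^ (qt + 2) := by simp only [hC₀def]; ring
      _ ≤ (C₀ + 1) * h ^ (qt + 2) := by nlinarith
  · -- O(h^{qt+2}) → Γ_{qt+1} = 0
    intro hB α hα
    set y : ℝ → ℝ := fun x =>
      (Nat.factorial (qt + 1) : ℝ) * ((x - 0) ^ (qt + 1) / (Nat.factorial (qt + 1) : ℝ))
      with hydef
    have hy : ContDiff ℝ (⊤ : ℕ∞) y :=
      contDiff_const.mul (((contDiff_id.sub contDiff_const).pow _).div_const _)
    obtain ⟨C, hC0, h₀, hh₀0, hbound⟩ := hB y hy 0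
    have hfac0 : (0 : ℝ) < (Nat.factorial (qt + 1) : ℝ) := by positivity
    have hval : ∀ h' : ℝ, stageResidual s c v btil b y 0 h' α
        = (Nat.factorial (qt + 1) : ℝ)
          * (-(GammaRow s c v btil b (qt + 1) α) * h' ^ (qt + 1)) := by
      intro h'
      rw [hydef, residual_smul _ _ (mono_differentiable 0 (qt + 1)), residual_mono]
    set A : ℝ := (Nat.factorial (qt + 1) : ℝ) * |GammaRow s c v btil b (qt + 1) α| with hAdef
    have key : ∀ h' ∈ Set.Ioc (0 : ℝ) h₀, A ≤ C * h' := by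
      intro h' hh'
      obtain ⟨hh'0, hh'1⟩ := hh'
      have := hbound h' ⟨hh'0, hh'1⟩ α hα
      rw [hval h'] at this
      have e : |(Nat.factorial (qt + 1) : ℝ)
          * (-(GammaRow s c v btil b (qt + 1) α) * h' ^ (qt + 1))|
          = A * h' ^ (qt + 1) := by
        rw [abs_mul, abs_mul, abs_neg, abs_of_pos hfac0,
          abs_of_pos (pow_pos hh'0 _), hAdef]
        ring
      rw [e] at this
      have e2 : C * h' ^ (qt + 2) = (C * h') * h' ^ (qt + 1) := by ring
      rw [e2] at this
      exact le_of_mul_le_mul_right this (pow_pos hh'0 _)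
    have hA0 : 0 ≤ A := mul_nonneg hfac0.le (abs_nonneg _)
    have hAz : A = 0 := by
      by_contra hne
      have hApos : 0 < A := lt_of_le_of_ne hA0 (Ne.symm hne)
      set h' : ℝ := min h₀ (A / (2 * C)) with hh'def
      have hh'0 : 0 < h' := lt_min hh₀0 (by positivity)
      have h1 : A ≤ C * h' := key h' ⟨hh'0, min_le_left _ _⟩
      have h2 : C * h' ≤ C * (A / (2 * C)) :=
        mul_le_mul_of_nonneg_left (min_le_right _ _) hC0.le
      have h3 : C * (A / (2 * C)) = A / 2 := by field_simp
      linarith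
    have : |GammaRow s c v btil b (qt + 1) α| = 0 := by
      rcases mul_eq_zero.mp hAz with h | h
      · exact absurd h (ne_of_gt hfac0)
      · exact h
    exact abs_eq_zero.mp this
end
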